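/- arXiv:2507.03717 — 2 statements merged into one kernel-verified Lean document; each statement's English description precedes it below -/
import Mathlib

section
/- Let k : ℝ × ℝ → ℝ be continuous and bounded, continuously differentiable in its first variable with T·∂_T k bounded. For T > 0 and Y ∈ ℝ define k̃(T,Y) = ∫_{1}^{∞} k(Tσ, Y) σ^{-2} dσ. Then k̃ is well-defined, differentiable in T, and satisfies (T·∂_T − 1) k̃ = −k, i.e. T·∂_T k̃(T,Y) − k̃(T,Y) = −k(T,Y). -/
open Real Set

/-- Partial derivative in the first variable. -/
noncomputable def pdx (f : ℝ × ℝ → ℝ) (p : ℝ × ℝ) : ℝ := deriv (fun x => f (x, p.2)) p.1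

/-- Partial derivative in the second variable. -/
noncomputable def pdy (f : ℝ × ℝ → ℝ) (p : ℝ × ℝ) : ℝ := deriv (fun y => f (p.1, y)) p.2

/-- Laplacian ∂²/∂x² + ∂²/∂y². -/
noncomputable def lap (f : ℝ × ℝ → ℝ) (p : ℝ × ℝ) : ℝ := pdx (pdx f) p + pdy (pdy f) p

/-- The transform k̃(T,Y) = ∫₁^∞ k(Tσ,Y) σ⁻² dσ. -/
noncomputable def ktilde (k : ℝ × ℝ → ℝ) (T Y : ℝ) : ℝ :=
  ∫ σ in Set.Ioi (1 : ℝ), k (T * σ, Y) / σ ^ 2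

/-!
The substitution `s = Tσ` gives `k̃(T,Y) = T · F(T)` with `F(T) = ∫_T^∞ k(s,Y) s⁻² ds`, which
converges because `k` is bounded. By the fundamental theorem of calculus `F'(T) = -k(T,Y) T⁻²`,
so `T ∂_T k̃ = T F(T) + T² F'(T) = k̃ - k`.
-/

open MeasureTheory Filter Topology

lemma integrableOn_Ioi_div_sq {f : ℝ → ℝ} (hf : Continuous f) {M : ℝ} (hM : ∀ s, |f s| ≤ M)
    {a : ℝ} (ha : 0 < a) : IntegrableOn (fun s => f s / s ^ 2) (Ioi a) := by
  refine Integrable.mono'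
    ((integrableOn_Ioi_rpow_of_lt (by norm_num : (-2 : ℝ) < -1) ha).const_mul M)
    ((hf.continuousOn.div (continuous_pow 2).continuousOn fun s hs =>
      pow_ne_zero 2 (ha.trans hs).ne').aestronglyMeasurable measurableSet_Ioi) ?_
  filter_upwards [ae_restrict_mem measurableSet_Ioi] with s hs
  have hs0 : 0 < s := ha.trans hs
  rw [Real.norm_eq_abs, abs_div, abs_of_pos (by positivity : 0 < s ^ 2), Real.rpow_neg hs0.le,
    Real.rpow_two, div_eq_mul_inv]
  gcongr
  exact hM s

lemma setIntegral_Ioi_one_comp_mul_div_sq (f : ℝ → ℝ) {t : ℝ} (ht : 0 < t) :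
    ∫ σ in Ioi (1 : ℝ), f (t * σ) / σ ^ 2 = t * ∫ s in Ioi t, f s / s ^ 2 := by
  have hscale : ∀ σ : ℝ, f (t * σ) / σ ^ 2 = t ^ 2 * (f (t * σ) / (t * σ) ^ 2) := fun σ => by
    rcases eq_or_ne σ 0 with rfl | hσ
    · simp
    · field_simp
  simp_rw [hscale, integral_const_mul, integral_comp_mul_left_Ioi (fun s => f s / s ^ 2) 1 ht,
    mul_one, smul_eq_mul]
  field_simp

lemma hasDerivAt_setIntegral_Ioi {E : Type*} [NormedAddCommGroup E] [NormedSpace ℝ E]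
    [CompleteSpace E] {g : ℝ → E} {a T : ℝ} (hint : IntegrableOn g (Ioi a))
    (hcont : ContinuousOn g (Ioi a)) (haT : a < T) :
    HasDerivAt (fun t => ∫ s in Ioi t, g s) (-g T) T := by
  have hsplit : ∀ᶠ t in 𝓝 T, ∫ s in Ioi t, g s = (∫ s in Ioi a, g s) - ∫ s in a..t, g s :=
    (eventually_gt_nhds haT).mono fun t hat => by
      rw [← intervalIntegral.integral_Ioi_sub_Ioi hint hat.le, sub_sub_cancel]
  refine HasDerivAt.congr_of_eventuallyEq ?_ hsplit
  refine (intervalIntegral.integral_hasDerivAt_right ?_ ?_ ?_).const_sub _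
  · exact (intervalIntegrable_iff_integrableOn_Ioc_of_le haT.le).2
      (hint.mono_set Ioc_subset_Ioi_self)
  · exact hcont.stronglyMeasurableAtFilter isOpen_Ioi T haT
  · exact hcont.continuousAt (Ioi_mem_nhds haT)

theorem right_inverse_of_D_minus_one_general (k : ℝ × ℝ → ℝ)
    (hk : Continuous k) (hbd : ∃ M, ∀ p, |k p| ≤ M) :
    ∀ T : ℝ, 0 < T → ∀ Y : ℝ,
      MeasureTheory.IntegrableOn (fun σ => k (T * σ, Y) / σ ^ 2) (Set.Ioi (1 : ℝ)) ∧
      DifferentiableAt ℝ (fun t => ktilde k t Y) T ∧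
      T * deriv (fun t => ktilde k t Y) T - ktilde k T Y = -k (T, Y) := by
  obtain ⟨M, hM⟩ := hbd
  intro T hT Y
  set g : ℝ → ℝ := fun s => k (s, Y) / s ^ 2
  have hsub : ∀ᶠ t in 𝓝 T, ktilde k t Y = t * ∫ s in Ioi t, g s :=
    (eventually_gt_nhds hT).mono fun t ht =>
      setIntegral_Ioi_one_comp_mul_div_sq (fun s => k (s, Y)) ht
  have hF : HasDerivAt (fun t => ∫ s in Ioi t, g s) (-g T) T :=
    hasDerivAt_setIntegral_Ioi
      (integrableOn_Ioi_div_sq (by fun_prop) (fun _ => hM _) (half_pos hT))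
      ((by fun_prop : Continuous fun s => k (s, Y)).continuousOn.div (by fun_prop)
        fun s hs => pow_ne_zero 2 ((half_pos hT).trans hs).ne')
      (half_lt_self hT)
  have hD : HasDerivAt (fun t => ktilde k t Y) ((1 * ∫ s in Ioi T, g s) + T * -g T) T :=
    ((hasDerivAt_id' T).mul hF).congr_of_eventuallyEq hsub
  refine ⟨integrableOn_Ioi_div_sq (by fun_prop) (fun _ => hM _) one_pos, hD.differentiableAt, ?_⟩
  have hgT : T * (T * g T) = k (T, Y) := by
    simp only [g]
    field_simp
  rw [hD.deriv, hsub.self_of_nhds]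
  linear_combination -hgT

/-- k̃ is well defined, differentiable in T, and (T∂_T − 1)k̃ = −k. -/
theorem right_inverse_of_D_minus_one (k : ℝ × ℝ → ℝ)
    (hk : Continuous k) (hbd : ∃ M, ∀ p, |k p| ≤ M)
    (hdiff : ∀ Y, Differentiable ℝ (fun t => k (t, Y)))
    (hdbd : ∃ M, ∀ T Y : ℝ, |T * deriv (fun t => k (t, Y)) T| ≤ M) :
    ∀ T : ℝ, 0 < T → ∀ Y : ℝ,
      MeasureTheory.IntegrableOn (fun σ => k (T * σ, Y) / σ ^ 2) (Set.Ioi (1 : ℝ)) ∧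
      DifferentiableAt ℝ (fun t => ktilde k t Y) T ∧
      T * deriv (fun t => ktilde k t Y) T - ktilde k T Y = -k (T, Y) :=
  right_inverse_of_D_minus_one_general k hk hbd
end

section
/- Let h : ℝ² → ℝ be three times continuously differentiable on {T > 0} and suppose Δh + k̃ = 0 where Δ = ∂²_T + ∂²_Y, and (D−1)k̃ = −k with D = T∂_T. Define w₁ = T^{-2}(D−1)h. Then L₀ w₁ = k, where L₀ = (D+2)(D−1) + T²∂²_Y. -/
open Real Set

/-- Euler operator D = T·∂_T in the (T,Y) variables. -/
noncomputable def Dop (f : ℝ × ℝ → ℝ) (p : ℝ × ℝ) : ℝ := p.1 * pdx f p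

/-!
With `D = T∂_T` one has `T²∂²_T = D(D − 1)` and `D(T⁻²f) = T⁻²(D − 2)f`, hence
`(D + 2)(T⁻²(D − 1)h) = ∂²_T h` and `(D + 2)(D − 1)w₁ = (D − 1)∂²_T h`; on each line `Y = const`
this is an identity of one-variable calculus. Multiplication by functions of `T` commutes with `∂_Y`,
and `(D − 1)` commutes with `∂²_Y` by the symmetry of the third derivatives of a `C³` function, so
`T²∂²_Y w₁ = (D − 1)∂²_Y h`. Adding up, `L₀w₁ = (D − 1)Δh = −(D − 1)k̃ = k`.
-/

open Filter Topology

theorem ContDiffOn.differentiableAt_of_isOpen {E F : Type*} [NormedAddCommGroup E]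
    [NormedSpace ℝ E] [NormedAddCommGroup F] [NormedSpace ℝ F] {f : E → F} {U : Set E} {p : E}
    {n : WithTop ℕ∞} (hf : ContDiffOn ℝ n f U) (hU : IsOpen U) (hn : n ≠ 0) (hp : p ∈ U) :
    DifferentiableAt ℝ f p :=
  (hf.contDiffAt (hU.mem_nhds hp)).differentiableAt hn

section Partials

variable {f g : ℝ × ℝ → ℝ} {p : ℝ × ℝ} {U : Set (ℝ × ℝ)}

theorem pdx_eq_fderiv (hf : DifferentiableAt ℝ f p) : pdx f p = fderiv ℝ f p (1, 0) :=
  (hf.hasFDerivAt.comp_hasDerivAt p.1 ((hasDerivAt_id p.1).prodMk (hasDerivAt_const p.1 p.2))).deriv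

theorem pdy_eq_fderiv (hf : DifferentiableAt ℝ f p) : pdy f p = fderiv ℝ f p (0, 1) :=
  (hf.hasFDerivAt.comp_hasDerivAt p.2 ((hasDerivAt_const p.2 p.1).prodMk (hasDerivAt_id p.2))).deriv

theorem hasDerivAt_pdx (hf : DifferentiableAt ℝ f p) :
    HasDerivAt (fun x => f (x, p.2)) (pdx f p) p.1 :=
  (hf.comp p.1 (differentiableAt_id.prodMk (differentiableAt_const p.2))).hasDerivAt

theorem hasDerivAt_pdy (hf : DifferentiableAt ℝ f p) :
    HasDerivAt (fun y => f (p.1, y)) (pdy f p) p.2 :=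
  (hf.comp p.2 ((differentiableAt_const p.1).prodMk differentiableAt_id)).hasDerivAt

theorem pdx_congr (hfg : f =ᶠ[𝓝 p] g) : pdx f p = pdx g p :=
  (hfg.comp_tendsto ((continuous_id.prodMk continuous_const).tendsto' p.1 p rfl)).deriv_eq

theorem pdy_congr (hfg : f =ᶠ[𝓝 p] g) : pdy f p = pdy g p :=
  (hfg.comp_tendsto ((continuous_const.prodMk continuous_id).tendsto' p.2 p rfl)).deriv_eq

theorem pdx_add (hf : DifferentiableAt ℝ f p) (hg : DifferentiableAt ℝ g p) :
    pdx (fun q => f q + g q) p = pdx f p + pdx g p :=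
  ((hasDerivAt_pdx hf).add (hasDerivAt_pdx hg)).deriv

theorem pdx_neg : pdx (fun q => -f q) p = -pdx f p :=
  deriv.fun_neg

theorem pdy_fst_mul_sub (hf : DifferentiableAt ℝ f p) (hg : DifferentiableAt ℝ g p) :
    pdy (fun q => q.1 * f q - g q) p = p.1 * pdy f p - pdy g p :=
  (((hasDerivAt_pdy hf).const_mul p.1).sub (hasDerivAt_pdy hg)).deriv

theorem pdy_div_fst (c : ℝ → ℝ) : pdy (fun q => f q / c q.1) = fun q => pdy f q / c q.1 :=
  funext fun q => deriv_div_const (c := fun y => f (q.1, y)) (c q.1)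

theorem ContDiffOn.pdx {m n : WithTop ℕ∞} (hf : ContDiffOn ℝ n f U) (hU : IsOpen U)
    (hmn : m + 1 ≤ n) : ContDiffOn ℝ m (pdx f) U :=
  ((hf.fderiv_of_isOpen hU hmn).clm_apply contDiffOn_const).congr fun _ hq =>
    pdx_eq_fderiv <| hf.differentiableAt_of_isOpen hU
      (zero_lt_one.trans_le (le_add_self.trans hmn)).ne' hq

theorem ContDiffOn.pdy {m n : WithTop ℕ∞} (hf : ContDiffOn ℝ n f U) (hU : IsOpen U)
    (hmn : m + 1 ≤ n) : ContDiffOn ℝ m (pdy f) U :=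
  ((hf.fderiv_of_isOpen hU hmn).clm_apply contDiffOn_const).congr fun _ hq =>
    pdy_eq_fderiv <| hf.differentiableAt_of_isOpen hU
      (zero_lt_one.trans_le (le_add_self.trans hmn)).ne' hq

theorem pdx_pdy_comm (hf : ContDiffOn ℝ 2 f U) (hU : IsOpen U) (hp : p ∈ U) :
    pdx (pdy f) p = pdy (pdx f) p := by
  have hd2 : DifferentiableAt ℝ (fderiv ℝ f) p :=
    (hf.fderiv_of_isOpen hU (m := 1) (by norm_num)).differentiableAt_of_isOpen hU one_ne_zero hp
  have hy : pdy f =ᶠ[𝓝 p] fun q => fderiv ℝ f q (0, 1) :=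
    eventually_of_mem (hU.mem_nhds hp) fun q hq =>
      pdy_eq_fderiv (hf.differentiableAt_of_isOpen hU two_ne_zero hq)
  have hx : pdx f =ᶠ[𝓝 p] fun q => fderiv ℝ f q (1, 0) :=
    eventually_of_mem (hU.mem_nhds hp) fun q hq =>
      pdx_eq_fderiv (hf.differentiableAt_of_isOpen hU two_ne_zero hq)
  rw [pdx_congr hy, pdy_congr hx, pdx_eq_fderiv (hd2.clm_apply (differentiableAt_const _)),
    pdy_eq_fderiv (hd2.clm_apply (differentiableAt_const _)),
    fderiv_clm_apply hd2 (differentiableAt_const _), fderiv_clm_apply hd2 (differentiableAt_const _)]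
  simpa using (hf.contDiffAt (hU.mem_nhds hp)).isSymmSndFDerivAt (by simp) (1, 0) (0, 1)

theorem pdy_pdy_pdx (hf : ContDiffOn ℝ 3 f U) (hU : IsOpen U) (hp : p ∈ U) :
    pdy (pdy (pdx f)) p = pdx (pdy (pdy f)) p :=
  calc pdy (pdy (pdx f)) p = pdy (pdx (pdy f)) p :=
        pdy_congr <| eventually_of_mem (hU.mem_nhds hp) fun _ hq =>
          (pdx_pdy_comm (hf.of_le (by norm_num)) hU hq).symm
    _ = pdx (pdy (pdy f)) p := (pdx_pdy_comm (hf.pdy hU (by norm_num)) hU hp).symm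

theorem pdy_pdy_fst_mul_pdx_sub (hf : ContDiffOn ℝ 3 f U) (hU : IsOpen U) (hp : p ∈ U) :
    pdy (pdy (fun q => q.1 * pdx f q - f q)) p = p.1 * pdx (pdy (pdy f)) p - pdy (pdy f) p := by
  have hfx : ContDiffOn ℝ 2 (pdx f) U := hf.pdx hU (by norm_num)
  have hpdy : pdy (fun q => q.1 * pdx f q - f q) =ᶠ[𝓝 p]
      fun q => q.1 * pdy (pdx f) q - pdy f q :=
    eventually_of_mem (hU.mem_nhds hp) fun q hq => pdy_fst_mul_sub
      (hfx.differentiableAt_of_isOpen hU two_ne_zero hq)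
      (hf.differentiableAt_of_isOpen hU three_ne_zero hq)
  rw [pdy_congr hpdy, pdy_fst_mul_sub
    ((hfx.pdy hU (m := 1) (by norm_num)).differentiableAt_of_isOpen hU one_ne_zero hp)
    ((hf.pdy hU (m := 2) (by norm_num)).differentiableAt_of_isOpen hU two_ne_zero hp),
    pdy_pdy_pdx hf hU hp]

theorem pdx_lap (hf : ContDiffOn ℝ 3 f U) (hU : IsOpen U) (hp : p ∈ U) :
    pdx (lap f) p = pdx (pdx (pdx f)) p + pdx (pdy (pdy f)) p :=
  pdx_add
    (((hf.pdx hU (m := 2) (by norm_num)).pdx hU (m := 1) (by norm_num)).differentiableAt_of_isOpen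
      hU one_ne_zero hp)
    (((hf.pdy hU (m := 2) (by norm_num)).pdy hU (m := 1) (by norm_num)).differentiableAt_of_isOpen
      hU one_ne_zero hp)

end Partials

noncomputable def euler (φ : ℝ → ℝ) (t : ℝ) : ℝ := t * deriv φ t

noncomputable def invSqEulerSubOne (φ : ℝ → ℝ) (t : ℝ) : ℝ := (euler φ t - φ t) / t ^ 2

section Euler

variable {φ : ℝ → ℝ} {t : ℝ}

theorem differentiableAt_invSqEulerSubOne (ht : t ≠ 0) (hφ : DifferentiableAt ℝ φ t)
    (hφ' : DifferentiableAt ℝ (deriv φ) t) : DifferentiableAt ℝ (invSqEulerSubOne φ) t :=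
  ((differentiableAt_id.mul hφ').sub hφ).div (differentiableAt_pow 2) (pow_ne_zero 2 ht)

theorem euler_invSqEulerSubOne_add_two (ht : t ≠ 0) (hφ : DifferentiableAt ℝ φ t)
    (hφ' : DifferentiableAt ℝ (deriv φ) t) :
    euler (invSqEulerSubOne φ) t + 2 * invSqEulerSubOne φ t = deriv (deriv φ) t := by
  have hψ : HasDerivAt (fun x => (x * deriv φ x - φ x) / x ^ 2) _ t :=
    (((hasDerivAt_id' t).mul hφ'.hasDerivAt).sub hφ.hasDerivAt).div
      (hasDerivAt_pow 2 t) (pow_ne_zero 2 ht)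
  unfold invSqEulerSubOne euler
  rw [hψ.deriv]
  simp only [Pi.mul_apply, Pi.sub_apply]
  field_simp
  ring

theorem euler_euler_invSqEulerSubOne {s : Set ℝ} (hs : IsOpen s) (hφ : ContDiffOn ℝ 3 φ s)
    (ht : t ∈ s) (ht0 : t ≠ 0) :
    euler (euler (invSqEulerSubOne φ)) t + euler (invSqEulerSubOne φ) t
        - 2 * invSqEulerSubOne φ t
      = euler (deriv (deriv φ)) t - deriv (deriv φ) t := by
  have hφ1 : ContDiffOn ℝ 2 (deriv φ) s := hφ.deriv_of_isOpen hs (by norm_num)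
  have hφ2 : ContDiffOn ℝ 1 (deriv (deriv φ)) s := hφ1.deriv_of_isOpen hs (by norm_num)
  have hD : euler (invSqEulerSubOne φ) =ᶠ[𝓝 t]
      fun x => deriv (deriv φ) x - 2 * invSqEulerSubOne φ x := by
    filter_upwards [hs.mem_nhds ht, eventually_ne_nhds ht0] with x hx hx0
    exact eq_sub_of_add_eq (euler_invSqEulerSubOne_add_two hx0
      (hφ.differentiableAt_of_isOpen hs three_ne_zero hx)
      (hφ1.differentiableAt_of_isOpen hs two_ne_zero hx))
  have hψ : DifferentiableAt ℝ (invSqEulerSubOne φ) t := differentiableAt_invSqEulerSubOne ht0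
    (hφ.differentiableAt_of_isOpen hs three_ne_zero ht)
    (hφ1.differentiableAt_of_isOpen hs two_ne_zero ht)
  have hderiv : deriv (euler (invSqEulerSubOne φ)) t
      = deriv (deriv (deriv φ)) t - 2 * deriv (invSqEulerSubOne φ) t := by
    rw [hD.deriv_eq, deriv_fun_sub (hφ2.differentiableAt_of_isOpen hs one_ne_zero ht)
      (hψ.const_mul 2), deriv_const_mul _ hψ]
  have hψt := euler_invSqEulerSubOne_add_two ht0
    (hφ.differentiableAt_of_isOpen hs three_ne_zero ht)
    (hφ1.differentiableAt_of_isOpen hs two_ne_zero ht)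
  rw [euler, hderiv]
  unfold euler at hψt ⊢
  linarith

end Euler

/-- if Δh + k̃ = 0 and (D−1)k̃ = −k on {T > 0}, then w₁ = T⁻²(D−1)h
solves the model Fuchsian equation L₀w₁ = k, L₀ = (D+2)(D−1) + T²∂²_Y. -/
theorem model_fuchsian_solution (h ktil k : ℝ × ℝ → ℝ)
    (hh : ContDiffOn ℝ 3 h {p : ℝ × ℝ | 0 < p.1})
    (hpoisson : ∀ p : ℝ × ℝ, 0 < p.1 → lap h p + ktil p = 0)
    (hktil : ∀ p : ℝ × ℝ, 0 < p.1 → p.1 * pdx ktil p - ktil p = -k p) :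
    ∀ p : ℝ × ℝ, 0 < p.1 →
      Dop (fun q => Dop (fun r => (r.1 * pdx h r - h r) / r.1 ^ 2) q) p
        + Dop (fun r => (r.1 * pdx h r - h r) / r.1 ^ 2) p
        - 2 * ((p.1 * pdx h p - h p) / p.1 ^ 2)
        + p.1 ^ 2 * pdy (pdy (fun r => (r.1 * pdx h r - h r) / r.1 ^ 2)) p
      = k p := by
  intro p hp
  have hU : IsOpen {p : ℝ × ℝ | 0 < p.1} := isOpen_lt continuous_const continuous_fst
  -- On the line `Y = p.2` the operators `Dop` and `pdx` are those of the slice `x ↦ h (x, p.2)`.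
  have hT : Dop (fun q => Dop (fun r => (r.1 * pdx h r - h r) / r.1 ^ 2) q) p
        + Dop (fun r => (r.1 * pdx h r - h r) / r.1 ^ 2) p
        - 2 * ((p.1 * pdx h p - h p) / p.1 ^ 2)
      = p.1 * pdx (pdx (pdx h)) p - pdx (pdx h) p :=
    euler_euler_invSqEulerSubOne (φ := fun x => h (x, p.2)) isOpen_Ioi
      (hh.comp (contDiffOn_id.prodMk contDiffOn_const) fun _ hx => hx) hp hp.ne'
  have hY : p.1 ^ 2 * pdy (pdy (fun r => (r.1 * pdx h r - h r) / r.1 ^ 2)) p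
      = p.1 * pdx (pdy (pdy h)) p - pdy (pdy h) p := by
    rw [pdy_div_fst (f := fun r => r.1 * pdx h r - h r) (· ^ 2),
      pdy_div_fst (f := pdy fun r => r.1 * pdx h r - h r) (· ^ 2)]
    beta_reduce
    rw [pdy_pdy_fst_mul_pdx_sub hh hU hp]
    field_simp
  have hk : k p = p.1 * pdx (lap h) p - lap h p := by
    have hktil_eq : ktil =ᶠ[𝓝 p] fun q => -lap h q :=
      eventually_of_mem (hU.mem_nhds hp) fun q hq => by linarith [hpoisson q hq]
    have hkp := hktil p hp
    rw [pdx_congr hktil_eq, pdx_neg] at hkp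
    linarith [hpoisson p hp]
  rw [hT, hY, hk, pdx_lap hh hU hp, lap]
  ring
end
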